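/- Let k ≥ 2 be an integer, ε ∈ [0,1], M a positive integer, and let ρ be a state on ℂ^M ⊗ ℂ^M such that F(ρ, Φ_M) ≥ 1−ε, where Φ_M is the maximally entangled state of Schmidt rank M. Then −log₂[1/M + 1/k − 1/(Mk)] ≤ E_k^ε(A;B)_ρ. -/

import Mathlib

open Matrix Kronecker
open scoped ComplexOrder

noncomputable section

/-- A quantum state: a positive semidefinite matrix with unit trace. -/
def IsState {n : Type} [Fintype n] (ρ : Matrix n n ℂ) : Prop :=
  ρ.PosSemidef ∧ ρ.trace = 1

/-- A pure quantum state: a rank-one projection onto a unit vector. -/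
def IsPureState {n : Type} [Fintype n] (ρ : Matrix n n ℂ) : Prop :=
  ∃ v : n → ℂ, (∑ i, Complex.normSq (v i)) = 1 ∧ ρ = Matrix.vecMulVec v (star v)

/-- The maximally entangled state `(1/|A|) ∑_{m,m'} |mm⟩⟨m'm'|` on `A ⊗ A`. -/
def maxEnt (A : Type) [Fintype A] [DecidableEq A] : Matrix (A × A) (A × A) ℂ :=
  Matrix.of fun p q => if p.1 = p.2 ∧ q.1 = q.2 then (1 : ℂ) / (Fintype.card A : ℂ) else 0

/-- The marginal of an operator on `A ⊗ B^{⊗ k}` obtained by tracing out all but the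
first copy of `B`. -/
def marginalFirst {A B : Type} [Fintype B] [DecidableEq B] {k : ℕ} (hk : 0 < k)
    (ω : Matrix (A × (Fin k → B)) (A × (Fin k → B)) ℂ) :
    Matrix (A × B) (A × B) ℂ :=
  Matrix.of fun p q => ∑ f : Fin k → B,
    if f ⟨0, hk⟩ = p.2 then ω (p.1, f) (q.1, Function.update f ⟨0, hk⟩ q.2) else 0

/-- Conjugation `W^π ω (W^π)†` of an operator on `A ⊗ B^{⊗ k}` by the unitary permuting
the `k` copies of `B` according to `π`. -/
def permAction {A B : Type} {k : ℕ} (π : Equiv.Perm (Fin k))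
    (ω : Matrix (A × (Fin k → B)) (A × (Fin k → B)) ℂ) :
    Matrix (A × (Fin k → B)) (A × (Fin k → B)) ℂ :=
  Matrix.of fun p q => ω (p.1, p.2 ∘ π) (q.1, q.2 ∘ π)

/-- A bipartite state (or operator) `ρ` on `A ⊗ B` is `k`-extendible with respect to `B`
if it has a permutation-invariant state extension on `A ⊗ B^{⊗ k}`. -/
def kExtendible {A B : Type} [Fintype A] [Fintype B] [DecidableEq B]
    (k : ℕ) (hk : 2 ≤ k) (ρ : Matrix (A × B) (A × B) ℂ) : Prop :=
  ∃ ω : Matrix (A × (Fin k → B)) (A × (Fin k → B)) ℂ,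
    IsState ω ∧ (∀ π : Equiv.Perm (Fin k), permAction π ω = ω) ∧
      marginalFirst (show 0 < k by omega) ω = ρ

/-- The tensor extension `id_R ⊗ Φ` of a linear map on matrices. -/
def tensorId (R : Type) {A B : Type} [Fintype A] [Fintype B]
    (Φ : Matrix A A ℂ →ₗ[ℂ] Matrix B B ℂ) :
    Matrix (R × A) (R × A) ℂ →ₗ[ℂ] Matrix (R × B) (R × B) ℂ where
  toFun X := Matrix.of fun p q => Φ (Matrix.of fun i j => X (p.1, i) (q.1, j)) p.2 q.2
  map_add' X Y := by
    ext p q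
    have h : (Matrix.of fun i j => (X + Y) (p.1, i) (q.1, j))
        = (Matrix.of fun i j => X (p.1, i) (q.1, j))
          + (Matrix.of fun i j => Y (p.1, i) (q.1, j)) := rfl
    show Φ (Matrix.of fun i j => (X + Y) (p.1, i) (q.1, j)) p.2 q.2 = _
    rw [h, map_add]
    rfl
  map_smul' c X := by
    ext p q
    have h : (Matrix.of fun i j => (c • X) (p.1, i) (q.1, j))
        = c • (Matrix.of fun i j => X (p.1, i) (q.1, j)) := rfl
    show Φ (Matrix.of fun i j => (c • X) (p.1, i) (q.1, j)) p.2 q.2 = _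
    rw [h, _root_.map_smul]
    rfl

/-- Complete positivity of a linear map on matrices. -/
def IsCP {A B : Type} [Fintype A] [Fintype B]
    (Φ : Matrix A A ℂ →ₗ[ℂ] Matrix B B ℂ) : Prop :=
  ∀ (R : Type) [Fintype R] (X : Matrix (R × A) (R × A) ℂ),
    X.PosSemidef → ((tensorId R Φ) X).PosSemidef

/-- A quantum channel: a completely positive trace-preserving linear map. -/
def IsCPTP {A B : Type} [Fintype A] [Fintype B]
    (Φ : Matrix A A ℂ →ₗ[ℂ] Matrix B B ℂ) : Prop :=
  IsCP Φ ∧ ∀ X : Matrix A A ℂ, (Φ X).trace = X.trace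

/-- A bipartite channel `N : AB → A'B'` is `k`-extendible if it is a channel and has a
channel extension `M : A B^{⊗k} → A' B'^{⊗k}` whose marginal on the first `B'` copy
reproduces `N` on the corresponding marginal input state, and which is covariant with
respect to simultaneous permutations of the `k` input and output `B` factors. -/
def kExtendibleChannel {A B A' B' : Type} [Fintype A] [Fintype B] [DecidableEq B]
    [Fintype A'] [Fintype B'] [DecidableEq B']
    (k : ℕ) (hk : 2 ≤ k)
    (N : Matrix (A × B) (A × B) ℂ →ₗ[ℂ] Matrix (A' × B') (A' × B') ℂ) : Prop :=
  IsCPTP N ∧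
  ∃ M : Matrix (A × (Fin k → B)) (A × (Fin k → B)) ℂ →ₗ[ℂ]
      Matrix (A' × (Fin k → B')) (A' × (Fin k → B')) ℂ,
    IsCPTP M ∧
    (∀ θ, IsState θ →
      marginalFirst (show 0 < k by omega) (M θ)
        = N (marginalFirst (show 0 < k by omega) θ)) ∧
    (∀ (π : Equiv.Perm (Fin k)) θ, M (permAction π θ) = permAction π (M θ))

/-- The ε-hypothesis-testing divergence `D_h^ε(ρ‖σ)`, valued in the extended reals. -/
def DH {n : Type} [Fintype n] [DecidableEq n] (ε : ℝ) (ρ σ : Matrix n n ℂ) : EReal :=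
  let β : ℝ := sInf { x : ℝ | ∃ Λ : Matrix n n ℂ, Λ.PosSemidef ∧ (1 - Λ).PosSemidef ∧
      1 - ε ≤ ((Λ * ρ).trace).re ∧ x = ((Λ * σ).trace).re }
  if β ≤ 0 then ⊤ else (((- Real.logb 2 β) : ℝ) : EReal)

/-- The k-unextendible ε-hypothesis-testing divergence
`E_k^ε(A;B)_ρ = inf {D_h^ε(ρ‖σ) : σ k-extendible state}`. -/
def EkEps {A B : Type} [Fintype A] [DecidableEq A] [Fintype B] [DecidableEq B]
    (k : ℕ) (hk : 2 ≤ k) (ε : ℝ) (ρ : Matrix (A × B) (A × B) ℂ) : EReal :=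
  sInf { x : EReal | ∃ σ : Matrix (A × B) (A × B) ℂ,
    IsState σ ∧ kExtendible k hk σ ∧ x = DH ε ρ σ }

/-- The max-relative entropy `D_max(ρ‖σ) = inf {λ : ρ ≤ 2^λ σ}`, valued in the extended
reals (equal to `⊤` when the support condition fails). -/
def Dmax {n : Type} [Fintype n] (ρ σ : Matrix n n ℂ) : EReal :=
  sInf { x : EReal | ∃ lam : ℝ, x = (lam : EReal) ∧
    ((((2 : ℝ) ^ lam : ℝ) : ℂ) • σ - ρ).PosSemidef }

/-- The k-unextendible max-relative entropy of a bipartite state: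
`E_k^max(A;B)_ρ = inf {D_max(ρ‖σ) : σ k-extendible state}`. -/
def EkMaxState {A B : Type} [Fintype A] [Fintype B] [DecidableEq B]
    (k : ℕ) (hk : 2 ≤ k) (ρ : Matrix (A × B) (A × B) ℂ) : EReal :=
  sInf { x : EReal | ∃ σ : Matrix (A × B) (A × B) ℂ,
    IsState σ ∧ kExtendible k hk σ ∧ x = Dmax ρ σ }

/-- The k-unextendible max-relative entropy of a channel `N : A → B`:
`E_k^max(N) = sup_ψ E_k^max(R;B)_{(id ⊗ N)(ψ)}` over pure inputs `ψ_{RA}` with `R ≅ A`. -/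
def EkMaxChannel {A B : Type} [Fintype A] [Fintype B] [DecidableEq B]
    (k : ℕ) (hk : 2 ≤ k) (N : Matrix A A ℂ →ₗ[ℂ] Matrix B B ℂ) : EReal :=
  sSup { x : EReal | ∃ ψ : Matrix (A × A) (A × A) ℂ, IsPureState ψ ∧
    x = EkMaxState k hk (tensorId A N ψ) }

/-- The positive semidefinite square root of a positive semidefinite matrix (the former
`Matrix.PosSemidef.sqrt`, removed from Mathlib). -/
def psdSqrt {n : Type} [Fintype n] [DecidableEq n] {A : Matrix n n ℂ} (hA : A.PosSemidef) :
    Matrix n n ℂ :=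
  hA.1.eigenvectorUnitary.1 * diagonal ((↑) ∘ (√·) ∘ hA.1.eigenvalues) *
    (star hA.1.eigenvectorUnitary : Matrix n n ℂ)

open scoped Classical in
/-- The fidelity `F(ρ,σ) = ‖√ρ √σ‖₁² = (Tr √((√ρ√σ)† (√ρ√σ)))²`. -/
def fidelity {n : Type} [Fintype n] [DecidableEq n] (ρ σ : Matrix n n ℂ) : ℝ :=
  if h : ρ.PosSemidef ∧ σ.PosSemidef then
    ((psdSqrt (Matrix.posSemidef_conjTranspose_mul_self (psdSqrt h.1 * psdSqrt h.2))).trace.re) ^ 2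
  else 0

/-- Reshuffling `(X ⊗ Y) ⊗ Z ≃ (X ⊗ Z) ⊗ Y`. -/
def assocShuffle (X Y Z : Type) : (X × Y) × Z ≃ (X × Z) × Y where
  toFun p := ((p.1.1, p.2), p.1.2)
  invFun p := ((p.1.1, p.2), p.1.2)
  left_inv _ := rfl
  right_inv _ := rfl

/-- Reshuffling `(X ⊗ Z) ⊗ W ≃ X ⊗ (W ⊗ Z)`. -/
def outShuffle (X Z W : Type) : (X × Z) × W ≃ X × (W × Z) where
  toFun p := (p.1.1, (p.2, p.1.2))
  invFun p := ((p.1, p.2.2), p.2.1)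
  left_inv _ := rfl
  right_inv _ := rfl

/-- Application of the channel `N : A → B` to the `A` factor of an operator on
`(X ⊗ A) ⊗ Z`, producing an operator on `X ⊗ (B ⊗ Z)`. -/
def channelStep (X Z : Type) [Fintype X] [Fintype Z] {A B : Type} [Fintype A] [Fintype B]
    (N : Matrix A A ℂ →ₗ[ℂ] Matrix B B ℂ)
    (ρ : Matrix ((X × A) × Z) ((X × A) × Z) ℂ) :
    Matrix (X × (B × Z)) (X × (B × Z)) ℂ :=
  (Matrix.reindex (outShuffle X Z B) (outShuffle X Z B))
    ((tensorId (X × Z) N)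
      ((Matrix.reindex (assocShuffle X A Z) (assocShuffle X A Z)) ρ))

/-- A separable bipartite state: a convex combination of product states. -/
def Separable {A B : Type} [Fintype A] [Fintype B]
    (σ : Matrix (A × B) (A × B) ℂ) : Prop :=
  ∃ (m : ℕ) (p : Fin m → ℝ) (τ : Fin m → Matrix A A ℂ) (ω : Fin m → Matrix B B ℂ),
    (∀ x, 0 ≤ p x) ∧ (∑ x, p x = 1) ∧ (∀ x, IsState (τ x)) ∧ (∀ x, IsState (ω x)) ∧
      σ = ∑ x, ((p x : ℂ) • (τ x ⊗ₖ ω x))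

/-- The tensor product `E ⊗ F` of two linear maps on matrices. -/
def tensorMap {A B A' B' : Type} [Fintype A] [Fintype B] [Fintype A'] [Fintype B']
    (E : Matrix A A ℂ →ₗ[ℂ] Matrix A' A' ℂ)
    (F : Matrix B B ℂ →ₗ[ℂ] Matrix B' B' ℂ) :
    Matrix (A × B) (A × B) ℂ →ₗ[ℂ] Matrix (A' × B') (A' × B') ℂ :=
  (Matrix.reindexLinearEquiv ℂ ℂ (Equiv.prodComm B' A') (Equiv.prodComm B' A')).toLinearMap
    ∘ₗ (tensorId B' E)
    ∘ₗ (Matrix.reindexLinearEquiv ℂ ℂ (Equiv.prodComm A B') (Equiv.prodComm A B')).toLinearMap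
    ∘ₗ (tensorId A F)

/-- A one-way LOCC channel from Alice to Bob: `L = ∑_y E^y ⊗ F^y` with `{E^y}` a quantum
instrument on Alice's side and each `F^y` a channel on Bob's side. -/
def IsOneWayLOCC {A B A' B' : Type} [Fintype A] [Fintype B] [Fintype A'] [Fintype B']
    (L : Matrix (A × B) (A × B) ℂ →ₗ[ℂ] Matrix (A' × B') (A' × B') ℂ) : Prop :=
  ∃ (m : ℕ) (E : Fin m → (Matrix A A ℂ →ₗ[ℂ] Matrix A' A' ℂ))
      (F : Fin m → (Matrix B B ℂ →ₗ[ℂ] Matrix B' B' ℂ)),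
    (∀ y, IsCP (E y)) ∧ (∀ X : Matrix A A ℂ, (∑ y, (E y) X).trace = X.trace) ∧
    (∀ y, IsCPTP (F y)) ∧ L = ∑ y, tensorMap (E y) (F y)

end


noncomputable section AuxEk
namespace EkAux
open Complex Matrix
open scoped ComplexOrder

open scoped MatrixOrder in
lemma psdSqrt_eq_cfcSqrt {n : Type} [Fintype n] [DecidableEq n] {A : Matrix n n ℂ}
    (hA : A.PosSemidef) : psdSqrt hA = CFC.sqrt A := by
  rw [CFC.sqrt_eq_real_sqrt A hA.nonneg, cfcₙ_eq_cfc (hf0 := Real.sqrt_zero), hA.1.cfc_eq]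
  simp only [psdSqrt, Matrix.IsHermitian.cfc, Unitary.conjStarAlgAut_apply]
  rfl

open scoped MatrixOrder in
lemma psdSqrt_psd {n : Type} [Fintype n] [DecidableEq n] {A : Matrix n n ℂ}
    (hA : A.PosSemidef) : (psdSqrt hA).PosSemidef := by
  rw [psdSqrt_eq_cfcSqrt]
  exact (CFC.sqrt_nonneg A).posSemidef

open scoped MatrixOrder in
lemma psdSqrt_mul_self {n : Type} [Fintype n] [DecidableEq n] {A : Matrix n n ℂ}
    (hA : A.PosSemidef) : psdSqrt hA * psdSqrt hA = A := by
  rw [psdSqrt_eq_cfcSqrt]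
  exact CFC.sqrt_mul_sqrt_self A hA.nonneg

open scoped MatrixOrder in
lemma eq_psdSqrt_of_sq_eq {n : Type} [Fintype n] [DecidableEq n] {A B : Matrix n n ℂ}
    (hA : A.PosSemidef) (hB : B.PosSemidef) (hAB : A ^ 2 = B) : A = psdSqrt hB := by
  rw [psdSqrt_eq_cfcSqrt]
  exact (CFC.sqrt_unique (by rw [← sq]; exact hAB) hA.nonneg).symm

lemma trace_quad_decomp {n : Type} [Fintype n] [DecidableEq n]
    (T : Matrix n n ℂ) {σ : Matrix n n ℂ} (hσ : σ.PosSemidef) :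
    ∃ B : Matrix n n ℂ,
      (T * σ).trace = ∑ r, star (fun p => (starRingEnd ℂ) (B r p)) ⬝ᵥ
          (T *ᵥ fun p => (starRingEnd ℂ) (B r p)) ∧
      (σ.trace).re = ∑ r, ∑ p, normSq (B r p) := by
  obtain ⟨B, hB⟩ : ∃ B : Matrix n n ℂ, σ = Bᴴ * B :=
    ⟨psdSqrt hσ, by rw [(psdSqrt_psd hσ).1, psdSqrt_mul_self]⟩
  refine ⟨B, ?_, ?_⟩
  · have h1 : (T * σ).trace = (B * T * Bᴴ).trace := by
      rw [hB, show T * (Bᴴ * B) = (T * Bᴴ) * B from (Matrix.mul_assoc _ _ _).symm,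
        trace_mul_comm, ← Matrix.mul_assoc]
    rw [h1, Matrix.trace]
    refine Finset.sum_congr rfl fun r _ => ?_
    simp only [Matrix.diag_apply, Matrix.mul_apply, Matrix.conjTranspose_apply,
      dotProduct, Matrix.mulVec, Pi.star_apply, dotProduct, RCLike.star_def,
      Complex.conj_conj, Finset.sum_mul, Finset.mul_sum]
    rw [Finset.sum_comm]
    refine Finset.sum_congr rfl fun q _ => Finset.sum_congr rfl fun p _ => by ring
  · rw [hB, Matrix.trace, Complex.re_sum,
      show ∑ r, ∑ p, normSq (B r p) = ∑ p, ∑ r, normSq (B r p) from Finset.sum_comm]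
    refine Finset.sum_congr rfl fun p _ => ?_
    simp only [Matrix.diag_apply, Matrix.mul_apply, Matrix.conjTranspose_apply]
    rw [Complex.re_sum]
    refine Finset.sum_congr rfl fun r _ => ?_
    simp [RCLike.star_def, Complex.mul_conj, Complex.normSq_apply]

lemma re_trace_mul_le {n : Type} [Fintype n] [DecidableEq n]
    {T σ : Matrix n n ℂ} (hσ : σ.PosSemidef) {c : ℝ}
    (hT : ∀ z : n → ℂ, (star z ⬝ᵥ T *ᵥ z).re ≤ c * ∑ p, normSq (z p)) :
    ((T * σ).trace).re ≤ c * (σ.trace).re := by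
  obtain ⟨B, h1, h2⟩ := trace_quad_decomp T hσ
  rw [h1, h2, Complex.re_sum, Finset.mul_sum]
  refine Finset.sum_le_sum fun r _ => ?_
  refine (hT _).trans (le_of_eq ?_)
  congr 1
  exact Finset.sum_congr rfl fun p _ => by simp [Complex.normSq_conj]

lemma re_trace_mul_nonneg {n : Type} [Fintype n] [DecidableEq n]
    {Λ σ : Matrix n n ℂ} (hΛ : Λ.PosSemidef) (hσ : σ.PosSemidef) :
    0 ≤ ((Λ * σ).trace).re := by
  obtain ⟨B, h1, _⟩ := trace_quad_decomp Λ hσ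
  rw [h1, Complex.re_sum]
  exact Finset.sum_nonneg fun r _ => hΛ.re_dotProduct_nonneg _



variable {M k : ℕ}

/-- The projector `|Φ⟩⟨Φ|_{AB_i} ⊗ I` on `A ⊗ B^k`. -/
def Pm (M k : ℕ) (i : Fin k) :
    Matrix (Fin M × (Fin k → Fin M)) (Fin M × (Fin k → Fin M)) ℂ :=
  Matrix.of fun p q =>
    if p.2 i = p.1 ∧ Function.update p.2 i q.1 = q.2 then ((M : ℂ))⁻¹ else 0

def Sv (z : Fin M × (Fin k → Fin M) → ℂ) (i : Fin k) (f : Fin k → Fin M) : ℂ :=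
  ∑ b, z (b, Function.update f i b)

/-- The slot-`i` reshuffling equiv. -/
def Esh (M k : ℕ) (i : Fin k) :
    (Fin M × (Fin k → Fin M)) ≃ (Fin M × (Fin k → Fin M)) where
  toFun p := (p.2 i, Function.update p.2 i p.1)
  invFun p := (p.2 i, Function.update p.2 i p.1)
  left_inv p := by
    simp [Function.update_idem]
  right_inv p := by
    simp [Function.update_idem]

lemma Sv_update (z : Fin M × (Fin k → Fin M) → ℂ) (i : Fin k) (f : Fin k → Fin M)
    (d : Fin M) : Sv z i (Function.update f i d) = Sv z i f := by
  unfold Sv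
  refine Finset.sum_congr rfl fun b _ => ?_
  rw [Function.update_idem]

/-- Grouping identity. -/
lemma grouping (z : Fin M × (Fin k → Fin M) → ℂ) (i : Fin k) :
    (M : ℂ) * ∑ f, (starRingEnd ℂ) (z (f i, f)) * Sv z i f
      = ∑ f, (normSq (Sv z i f) : ℂ) := by
  have h1 : (M : ℂ) * ∑ f, (starRingEnd ℂ) (z (f i, f)) * Sv z i f
      = ∑ p : Fin M × (Fin k → Fin M), (starRingEnd ℂ) (z (p.2 i, p.2)) * Sv z i p.2 := by
    rw [Fintype.sum_prod_type]
    simp [Finset.sum_const, Finset.card_univ, nsmul_eq_mul]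
  rw [h1, ← Equiv.sum_comp (Esh M k i)
    (fun p => (starRingEnd ℂ) (z (p.2 i, p.2)) * Sv z i p.2)]
  have h2 : ∀ p : Fin M × (Fin k → Fin M),
      (starRingEnd ℂ) (z ((Esh M k i p).2 i, (Esh M k i p).2)) * Sv z i (Esh M k i p).2
        = (starRingEnd ℂ) (z (p.1, Function.update p.2 i p.1)) * Sv z i p.2 := by
    intro p
    simp [Esh, Sv_update]
  rw [Finset.sum_congr rfl fun p _ => h2 p, Fintype.sum_prod_type_right]
  refine Finset.sum_congr rfl fun f _ => ?_
  dsimp only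
  rw [← Finset.sum_mul, ← map_sum, ← Sv, Complex.normSq_eq_conj_mul_self]

/-- Counting lemma. -/
lemma counting (i j : Fin k) (hij : i ≠ j) (G : (Fin k → Fin M) → ℝ)
    (hG : ∀ f d, G (Function.update f i d) = G f) :
    (M : ℝ) * ∑ f, (if f i = f j then G f else 0) = ∑ f, G f := by
  have h1 : (M : ℝ) * ∑ f, (if f i = f j then G f else 0)
      = ∑ p : Fin M × (Fin k → Fin M), (if p.2 i = p.2 j then G p.2 else 0) := by
    rw [Fintype.sum_prod_type]
    simp [Finset.sum_const, Finset.card_univ, nsmul_eq_mul]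
  rw [h1, ← Equiv.sum_comp (Esh M k i)
    (fun p => if p.2 i = p.2 j then G p.2 else 0)]
  have h2 : ∀ p : Fin M × (Fin k → Fin M),
      (if (Esh M k i p).2 i = (Esh M k i p).2 j then G (Esh M k i p).2 else 0)
        = (if p.1 = p.2 j then G p.2 else 0) := by
    intro p
    simp only [Esh, Equiv.coe_fn_mk, Function.update_self, hG,
      Function.update_of_ne (Ne.symm hij)]
  rw [Finset.sum_congr rfl fun p _ => h2 p, Fintype.sum_prod_type_right]
  refine Finset.sum_congr rfl fun f _ => ?_
  dsimp only
  simp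


lemma Pm_mulVec (i : Fin k) (z : Fin M × (Fin k → Fin M) → ℂ)
    (p : Fin M × (Fin k → Fin M)) :
    (Pm M k i *ᵥ z) p = if p.2 i = p.1 then (M : ℂ)⁻¹ * Sv z i p.2 else 0 := by
  simp only [Matrix.mulVec, dotProduct, Pm, Matrix.of_apply, Fintype.sum_prod_type]
  by_cases h : p.2 i = p.1
  · simp only [h, true_and, Sv, Finset.mul_sum]
    refine Finset.sum_congr rfl fun b _ => ?_
    rw [Finset.sum_eq_single (Function.update p.2 i b)]
    · simp
    · intro g _ hg
      rw [if_neg fun he => hg he.symm, zero_mul]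
    · intro hnot
      exact absurd (Finset.mem_univ _) hnot
  · simp [h]

lemma quad_single (hM : 0 < M) (i : Fin k) (z : Fin M × (Fin k → Fin M) → ℂ) :
    star z ⬝ᵥ (Pm M k i *ᵥ z)
      = ((((M : ℝ))⁻¹ ^ 2 * ∑ f, normSq (Sv z i f) : ℝ) : ℂ) := by
  have hM0 : (M : ℂ) ≠ 0 := Nat.cast_ne_zero.mpr hM.ne'
  have h1 : star z ⬝ᵥ (Pm M k i *ᵥ z)
      = (M : ℂ)⁻¹ * ∑ f, (starRingEnd ℂ) (z (f i, f)) * Sv z i f := by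
    simp only [dotProduct, Pi.star_apply, RCLike.star_def, Pm_mulVec,
      Fintype.sum_prod_type_right, Finset.mul_sum]
    refine Finset.sum_congr rfl fun f _ => ?_
    rw [Finset.sum_eq_single (f i)]
    · rw [if_pos rfl]
      ring
    · intro a _ ha
      simp [Ne.symm ha]
    · intro hnot
      exact absurd (Finset.mem_univ _) hnot
  have h2 := grouping z i
  have h3 : (∑ f, (starRingEnd ℂ) (z (f i, f)) * Sv z i f)
      = (M : ℂ)⁻¹ * ∑ f, (normSq (Sv z i f) : ℂ) := by
    field_simp
    linear_combination h2
  rw [h1, h3]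
  push_cast
  rw [Finset.mul_sum, Finset.mul_sum, Finset.mul_sum]
  refine Finset.sum_congr rfl fun f _ => ?_
  ring


lemma cs_complex {α : Type*} [Fintype α] (a b : α → ℂ) :
    ‖∑ x, (starRingEnd ℂ) (a x) * b x‖
      ≤ Real.sqrt (∑ x, normSq (a x)) * Real.sqrt (∑ x, normSq (b x)) := by
  have h1 : ‖∑ x, (starRingEnd ℂ) (a x) * b x‖
      ≤ ∑ x, ‖a x‖ * ‖b x‖ := by
    refine (norm_sum_le _ _).trans (le_of_eq ?_)
    refine Finset.sum_congr rfl fun x _ => ?_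
    rw [norm_mul, Complex.norm_conj]
  refine h1.trans ?_
  have h2 := Finset.sum_mul_sq_le_sq_mul_sq Finset.univ (fun x => ‖a x‖)
    (fun x => ‖b x‖)
  have h3 : ∀ (c : α → ℂ), ∑ x, ‖c x‖ ^ 2 = ∑ x, normSq (c x) := by
    intro c; exact Finset.sum_congr rfl fun x _ => Complex.sq_norm _
  rw [h3, h3] at h2
  have hna : 0 ≤ ∑ x, normSq (a x) := Finset.sum_nonneg fun x _ => Complex.normSq_nonneg _
  have hnb : 0 ≤ ∑ x, normSq (b x) := Finset.sum_nonneg fun x _ => Complex.normSq_nonneg _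
  rw [← Real.sqrt_mul hna]
  exact (Real.le_sqrt (Finset.sum_nonneg fun x _ => by positivity) (mul_nonneg hna hnb)).mpr h2

lemma quad_bound (hM : 0 < M) (z : Fin M × (Fin k → Fin M) → ℂ) :
    (star z ⬝ᵥ ((∑ i, Pm M k i) *ᵥ z)).re
      ≤ (1 + ((k : ℝ) - 1) * (M : ℝ)⁻¹) * ∑ p, normSq (z p) := by
  classical
  set w : Fin k → (Fin k → Fin M) → ℂ := fun i f => (M : ℂ)⁻¹ * Sv z i f with hw
  set R : Fin k → ℝ := fun i => (M : ℝ)⁻¹ ^ 2 * ∑ f, normSq (Sv z i f) with hR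
  set s : ℝ := ∑ i, R i with hs
  set n : ℝ := ∑ p, normSq (z p) with hn
  set ck : ℝ := 1 + ((k : ℝ) - 1) * (M : ℝ)⁻¹ with hck
  set u : Fin M × (Fin k → Fin M) → ℂ := fun p => ∑ i, (Pm M k i *ᵥ z) p with hu
  have hRnn : ∀ i, 0 ≤ R i := fun i =>
    mul_nonneg (by positivity) (Finset.sum_nonneg fun f _ => Complex.normSq_nonneg _)
  have hsnn : 0 ≤ s := Finset.sum_nonneg fun i _ => hRnn i
  have hnnn : 0 ≤ n := Finset.sum_nonneg fun p _ => Complex.normSq_nonneg _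
  have hcknn : 0 ≤ ck := by
    have h2k : (1:ℝ) ≤ (k:ℝ) ∨ (k:ℝ) = 0 := by
      rcases Nat.eq_zero_or_pos k with h | h
      · right; exact_mod_cast h
      · left; exact_mod_cast h
    rcases h2k with h | h
    · have h2 : (0:ℝ) ≤ ((k:ℝ)-1) * (M:ℝ)⁻¹ := mul_nonneg (by linarith) (by positivity)
      rw [hck]; linarith
    · rw [hck, h]
      have hM1 : (M:ℝ)⁻¹ ≤ 1 := by
        rw [inv_le_one_iff₀]; right; exact_mod_cast hM
      linarith
  -- normSq of w
  have hwnormSq : ∀ i f, normSq (w i f) = (M : ℝ)⁻¹ ^ 2 * normSq (Sv z i f) := by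
    intro i f
    rw [hw]
    simp only [Complex.normSq_mul]
    congr 1
    rw [show ((M:ℂ))⁻¹ = ((((M:ℝ))⁻¹ : ℝ) : ℂ) by push_cast; ring]
    rw [Complex.normSq_ofReal, sq]
  have hsumw : ∀ i, ∑ f, normSq (w i f) = R i := by
    intro i
    rw [hR]
    simp only [hwnormSq, Finset.mul_sum]
  -- mulVec in terms of w
  have hPmv : ∀ (i : Fin k) p, (Pm M k i *ᵥ z) p = if p.2 i = p.1 then w i p.2 else 0 :=
    fun i p => Pm_mulVec i z p
  -- pairing : star z ⬝ᵥ u = s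
  have hpair : ∑ p, (starRingEnd ℂ) (z p) * u p = (s : ℂ) := by
    rw [hu]
    simp only [Finset.mul_sum]
    rw [Finset.sum_comm]
    rw [hs]
    push_cast
    refine Finset.sum_congr rfl fun i _ => ?_
    have := quad_single (k := k) hM i z
    simpa [dotProduct, Pi.star_apply, RCLike.star_def, hR] using this
  -- C i j identities
  have hCsum : ∑ p, (starRingEnd ℂ) (u p) * u p
      = ∑ i, ∑ j, ∑ f, (if f i = f j then (starRingEnd ℂ) (w i f) * w j f else 0) := by
    have expand : ∀ p, (starRingEnd ℂ) (u p) * u p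
        = ∑ i, ∑ j, ((if p.2 i = p.1 then (starRingEnd ℂ) (w i p.2) else 0)
            * (if p.2 j = p.1 then w j p.2 else 0)) := by
      intro p
      rw [hu, map_sum, Finset.sum_mul_sum]
      refine Finset.sum_congr rfl fun i _ => Finset.sum_congr rfl fun j _ => ?_
      rw [hPmv, hPmv, apply_ite (starRingEnd ℂ), map_zero]
    rw [Finset.sum_congr rfl fun p _ => expand p]
    rw [Finset.sum_comm]
    refine Finset.sum_congr rfl fun i _ => ?_
    rw [Finset.sum_comm]
    refine Finset.sum_congr rfl fun j _ => ?_
    rw [Fintype.sum_prod_type_right]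
    refine Finset.sum_congr rfl fun f _ => ?_
    dsimp only
    rw [Finset.sum_eq_single (f i)]
    · by_cases hij : f i = f j
      · rw [if_pos rfl, if_pos (hij.symm), if_pos hij]
      · rw [if_pos rfl, if_neg (fun h => hij (h.symm)), if_neg hij, mul_zero]
    · intro a _ ha
      rw [if_neg (Ne.symm ha), zero_mul]
    · intro hnot
      exact absurd (Finset.mem_univ _) hnot
  -- counting consequences
  have hcount_i : ∀ i j : Fin k, i ≠ j →
      ∑ f, (if f i = f j then normSq (w i f) else 0) = (M:ℝ)⁻¹ * R i := by
    intro i j hij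
    have hGinv : ∀ f d, normSq (w i (Function.update f i d)) = normSq (w i f) := by
      intro f d
      rw [hw]
      dsimp only
      rw [Sv_update]
    have := counting i j hij (fun f => normSq (w i f)) hGinv
    have hM0 : (M:ℝ) ≠ 0 := Nat.cast_ne_zero.mpr hM.ne'
    rw [hsumw i] at this
    field_simp
    linarith [this]
  have hcount_j : ∀ i j : Fin k, i ≠ j →
      ∑ f, (if f i = f j then normSq (w j f) else 0) = (M:ℝ)⁻¹ * R j := by
    intro i j hij
    have hGinv : ∀ f d, normSq (w j (Function.update f j d)) = normSq (w j f) := by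
      intro f d
      rw [hw]
      dsimp only
      rw [Sv_update]
    have := counting j i hij.symm (fun f => normSq (w j f)) hGinv
    rw [hsumw j] at this
    have heq : ∑ f, (if f i = f j then normSq (w j f) else 0)
        = ∑ f, (if f j = f i then normSq (w j f) else 0) := by
      refine Finset.sum_congr rfl fun f _ => ?_
      by_cases h : f i = f j
      · rw [if_pos h, if_pos h.symm]
      · rw [if_neg h, if_neg (fun hh => h hh.symm)]
    have hM0 : (M:ℝ) ≠ 0 := Nat.cast_ne_zero.mpr hM.ne'
    rw [heq]
    field_simp
    linarith [this]
  -- bound on re C i j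
  have hCre : ∀ i j : Fin k,
      (∑ f, (if f i = f j then (starRingEnd ℂ) (w i f) * w j f else 0)).re
        ≤ if i = j then R i else (M:ℝ)⁻¹ * (R i + R j) / 2 := by
    intro i j
    by_cases hij : i = j
    · subst hij
      rw [if_pos rfl]
      have : ∑ f, (if f i = f i then (starRingEnd ℂ) (w i f) * w i f else 0)
          = ((R i : ℝ) : ℂ) := by
        rw [← hsumw i]
        push_cast
        refine Finset.sum_congr rfl fun f _ => ?_
        rw [if_pos rfl, ← Complex.normSq_eq_conj_mul_self]
      rw [this, Complex.ofReal_re]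
    · rw [if_neg hij]
      set a : (Fin k → Fin M) → ℂ := fun f => if f i = f j then w i f else 0 with ha
      set b : (Fin k → Fin M) → ℂ := fun f => if f i = f j then w j f else 0 with hb
      have habeq : ∑ f, (if f i = f j then (starRingEnd ℂ) (w i f) * w j f else 0)
          = ∑ f, (starRingEnd ℂ) (a f) * b f := by
        refine Finset.sum_congr rfl fun f _ => ?_
        rw [ha, hb]
        by_cases h : f i = f j
        · rw [if_pos h]; dsimp only; rw [if_pos h, if_pos h]
        · rw [if_neg h]; dsimp only; rw [if_neg h, if_neg h, map_zero, zero_mul]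
      have hcs := cs_complex a b
      have hnsa : ∑ f, normSq (a f) = (M:ℝ)⁻¹ * R i := by
        rw [← hcount_i i j hij]
        refine Finset.sum_congr rfl fun f _ => ?_
        rw [ha]
        by_cases h : f i = f j
        · dsimp only; rw [if_pos h, if_pos h]
        · dsimp only; rw [if_neg h, if_neg h, Complex.normSq_zero]
      have hnsb : ∑ f, normSq (b f) = (M:ℝ)⁻¹ * R j := by
        rw [← hcount_j i j hij]
        refine Finset.sum_congr rfl fun f _ => ?_
        rw [hb]
        by_cases h : f i = f j
        · dsimp only; rw [if_pos h, if_pos h]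
        · dsimp only; rw [if_neg h, if_neg h, Complex.normSq_zero]
      rw [habeq]
      refine le_trans (Complex.re_le_norm _) ?_
      rw [hnsa, hnsb] at hcs
      refine hcs.trans ?_
      have hMi : (0:ℝ) ≤ (M:ℝ)⁻¹ := by positivity
      have h1 : Real.sqrt ((M:ℝ)⁻¹ * R i) * Real.sqrt ((M:ℝ)⁻¹ * R j)
          = (M:ℝ)⁻¹ * (Real.sqrt (R i) * Real.sqrt (R j)) := by
        rw [Real.sqrt_mul hMi, Real.sqrt_mul hMi]
        rw [show Real.sqrt (M:ℝ)⁻¹ * Real.sqrt (R i) * (Real.sqrt (M:ℝ)⁻¹ * Real.sqrt (R j))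
          = (Real.sqrt (M:ℝ)⁻¹ * Real.sqrt (M:ℝ)⁻¹) * (Real.sqrt (R i) * Real.sqrt (R j)) by ring]
        rw [Real.mul_self_sqrt hMi]
      rw [h1]
      have hgm : Real.sqrt (R i) * Real.sqrt (R j) ≤ (R i + R j) / 2 := by
        nlinarith [Real.sq_sqrt (hRnn i), Real.sq_sqrt (hRnn j),
          sq_nonneg (Real.sqrt (R i) - Real.sqrt (R j)), Real.sqrt_nonneg (R i),
          Real.sqrt_nonneg (R j)]
      calc (M:ℝ)⁻¹ * (Real.sqrt (R i) * Real.sqrt (R j))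
          ≤ (M:ℝ)⁻¹ * ((R i + R j) / 2) := by
            exact mul_le_mul_of_nonneg_left hgm hMi
        _ = (M:ℝ)⁻¹ * (R i + R j) / 2 := by ring
  -- sum of the bounds
  have hbound_sum : ∑ i : Fin k, ∑ j : Fin k,
      (if i = j then R i else (M:ℝ)⁻¹ * (R i + R j) / 2) ≤ ck * s := by
    have hrow : ∀ i : Fin k, ∑ j : Fin k,
        (if i = j then R i else (M:ℝ)⁻¹ * (R i + R j) / 2)
          = (∑ j, (M:ℝ)⁻¹ * (R i + R j) / 2) + (R i - (M:ℝ)⁻¹ * R i) := by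
      intro i
      have : ∀ j : Fin k, (if i = j then R i else (M:ℝ)⁻¹ * (R i + R j) / 2)
          = (M:ℝ)⁻¹ * (R i + R j) / 2
            + (if i = j then R i - (M:ℝ)⁻¹ * R i else 0) := by
        intro j
        by_cases h : i = j
        · subst h; rw [if_pos rfl, if_pos rfl]; ring
        · rw [if_neg h, if_neg h]; ring
      rw [Finset.sum_congr rfl fun j _ => this j, Finset.sum_add_distrib,
        Finset.sum_ite_eq Finset.univ i (fun _ => R i - (M:ℝ)⁻¹ * R i)]
      simp
    rw [Finset.sum_congr rfl fun i _ => hrow i]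
    have hexp : ∀ i : Fin k, (∑ j, (M:ℝ)⁻¹ * (R i + R j) / 2) + (R i - (M:ℝ)⁻¹ * R i)
        = (M:ℝ)⁻¹ * ((k:ℝ) * R i + s) / 2 + R i - (M:ℝ)⁻¹ * R i := by
      intro i
      have hsum2 : ∑ j : Fin k, ((M:ℝ)⁻¹ * R i / 2 + (M:ℝ)⁻¹ * R j / 2)
          = (M:ℝ)⁻¹ * ((k:ℝ) * R i + s) / 2 := by
        rw [Finset.sum_add_distrib, Finset.sum_const, Finset.card_univ, Fintype.card_fin,
          nsmul_eq_mul]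
        rw [show ∑ j : Fin k, (M:ℝ)⁻¹ * R j / 2 = (M:ℝ)⁻¹ * s / 2 by
          rw [hs, Finset.mul_sum, Finset.sum_div]]
        ring
      have : ∑ j, (M:ℝ)⁻¹ * (R i + R j) / 2 = (M:ℝ)⁻¹ * ((k:ℝ) * R i + s) / 2 := by
        rw [← hsum2]
        exact Finset.sum_congr rfl fun j _ => by ring
      rw [this]; ring
    rw [Finset.sum_congr rfl fun i _ => hexp i]
    have htot : ∑ i : Fin k, ((M:ℝ)⁻¹ * ((k:ℝ) * R i + s) / 2 + R i - (M:ℝ)⁻¹ * R i)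
        = ck * s := by
      have hterm : ∀ i : Fin k, (M:ℝ)⁻¹ * ((k:ℝ) * R i + s) / 2 + R i - (M:ℝ)⁻¹ * R i
          = ((M:ℝ)⁻¹ * (k:ℝ) / 2 + 1 - (M:ℝ)⁻¹) * R i + (M:ℝ)⁻¹ * s / 2 := fun i => by ring
      rw [Finset.sum_congr rfl fun i _ => hterm i, Finset.sum_add_distrib,
        ← Finset.mul_sum, ← hs, Finset.sum_const, Finset.card_univ, Fintype.card_fin,
        nsmul_eq_mul, hck]
      ring
    exact htot.le
  -- assemble
  set Nu : ℝ := ∑ p, normSq (u p) with hNu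
  have hNuC : ∑ p, ((normSq (u p) : ℝ) : ℂ) = ∑ p, (starRingEnd ℂ) (u p) * u p :=
    Finset.sum_congr rfl fun p _ => Complex.normSq_eq_conj_mul_self
  have hNure : Nu = (∑ p, (starRingEnd ℂ) (u p) * u p).re := by
    rw [← hNuC, Complex.re_sum]
    simp [hNu]
  have hNule : Nu ≤ ck * s := by
    rw [hNure, hCsum, Complex.re_sum]
    refine le_trans (Finset.sum_le_sum fun i (_ : i ∈ Finset.univ) => ?_) hbound_sum
    rw [Complex.re_sum]
    exact Finset.sum_le_sum fun j _ => hCre i j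
  have hNunn : 0 ≤ Nu := Finset.sum_nonneg fun p _ => Complex.normSq_nonneg _
  have hlhs : (star z ⬝ᵥ ((∑ i, Pm M k i) *ᵥ z)) = ((s : ℝ) : ℂ) := by
    have hmv : ((∑ i, Pm M k i) *ᵥ z) = u := by
      funext p
      rw [hu]
      simp only [Matrix.mulVec, dotProduct, Matrix.sum_apply, Finset.sum_mul]
      exact Finset.sum_comm
    rw [hmv, ← hpair]
    simp [dotProduct]
  rw [hlhs, Complex.ofReal_re]
  have hCS : s ≤ Real.sqrt n * Real.sqrt Nu := by
    have hc := cs_complex z u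
    rw [hpair] at hc
    have habs : ‖((s:ℝ):ℂ)‖ = s := by
      rw [Complex.norm_of_nonneg hsnn]
    rw [habs] at hc
    exact hc
  by_cases hs0 : s = 0
  · rw [hs0]
    exact mul_nonneg hcknn hnnn
  · have hspos : 0 < s := lt_of_le_of_ne hsnn (Ne.symm hs0)
    have h2 : s ≤ Real.sqrt n * Real.sqrt (ck * s) := by
      refine hCS.trans ?_
      exact mul_le_mul_of_nonneg_left (Real.sqrt_le_sqrt hNule) (Real.sqrt_nonneg _)
    have h3 : s^2 ≤ n * (ck * s) := by
      have hmul := mul_le_mul h2 h2 hsnn (by positivity)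
      calc s^2 = s * s := sq s
        _ ≤ (Real.sqrt n * Real.sqrt (ck * s)) * (Real.sqrt n * Real.sqrt (ck * s)) := hmul
        _ = (Real.sqrt n * Real.sqrt n) * (Real.sqrt (ck * s) * Real.sqrt (ck * s)) := by ring
        _ = n * (ck * s) := by
            rw [Real.mul_self_sqrt hnnn, Real.mul_self_sqrt (mul_nonneg hcknn hsnn)]
    have h4 : s * s ≤ (ck * n) * s := by
      calc s * s = s^2 := (sq s).symm
        _ ≤ n * (ck * s) := h3
        _ = (ck * n) * s := by ring
    exact le_of_mul_le_mul_right h4 hspos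


/-! ### generalities -/

lemma dot_star_self {α : Type} [Fintype α] (x : α → ℂ) :
    star x ⬝ᵥ x = ((∑ p, normSq (x p) : ℝ) : ℂ) := by
  simp only [dotProduct, Pi.star_apply, RCLike.star_def]
  push_cast
  exact Finset.sum_congr rfl fun p _ => Complex.normSq_eq_conj_mul_self.symm

lemma vecMulVec_quad {α : Type} [Fintype α] (v x : α → ℂ) :
    star x ⬝ᵥ (Matrix.vecMulVec v (star v) *ᵥ x)
      = ((normSq (∑ q, (starRingEnd ℂ) (v q) * x q) : ℝ) : ℂ) := by
  simp only [Matrix.mulVec, dotProduct, Matrix.vecMulVec_apply, Pi.star_apply,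
    RCLike.star_def]
  rw [Complex.normSq_eq_conj_mul_self, map_sum, Finset.sum_mul_sum]
  refine Finset.sum_congr rfl fun p _ => ?_
  rw [Finset.mul_sum]
  refine Finset.sum_congr rfl fun q _ => ?_
  simp only [_root_.map_mul, Complex.conj_conj]
  ring

lemma psd_vecMulVec {α : Type} [Fintype α] (v : α → ℂ) :
    (Matrix.vecMulVec v (star v)).PosSemidef := by
  refine Matrix.PosSemidef.of_dotProduct_mulVec_nonneg ?_ ?_
  · ext p q
    simp only [Matrix.conjTranspose_apply, Matrix.vecMulVec_apply, Pi.star_apply,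
      RCLike.star_def, _root_.map_mul, Complex.conj_conj]
    ring
  · intro x
    rw [vecMulVec_quad]
    exact Complex.zero_le_real.mpr (Complex.normSq_nonneg _)

lemma psd_smul_real {α : Type} [Fintype α] {A : Matrix α α ℂ} (hA : A.PosSemidef) {r : ℝ}
    (hr : 0 ≤ r) : (((r : ℂ)) • A).PosSemidef := by
  refine Matrix.PosSemidef.of_dotProduct_mulVec_nonneg ?_ ?_
  · have h1 := hA.1
    unfold Matrix.IsHermitian at h1 ⊢
    rw [Matrix.conjTranspose_smul, h1, RCLike.star_def, Complex.conj_ofReal]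
  · intro x
    rw [Matrix.smul_mulVec, dotProduct_smul, smul_eq_mul]
    exact mul_nonneg (Complex.zero_le_real.mpr hr) (hA.dotProduct_mulVec_nonneg x)

lemma trace_mul_psd_nonneg {n : Type} [Fintype n] [DecidableEq n]
    {Λ σ : Matrix n n ℂ} (hΛ : Λ.PosSemidef) (hσ : σ.PosSemidef) :
    0 ≤ (Λ * σ).trace := by
  obtain ⟨B, h1, _⟩ := trace_quad_decomp Λ hσ
  rw [h1]
  exact Finset.sum_nonneg fun r _ => hΛ.dotProduct_mulVec_nonneg _

lemma sum_diag_ite {β : Type*} [AddCommMonoid β] {N : ℕ} (g : Fin N × Fin N → β) :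
    ∑ p : Fin N × Fin N, (if p.1 = p.2 then g p else 0) = ∑ a, g (a, a) := by
  rw [Fintype.sum_prod_type]
  refine Finset.sum_congr rfl fun a _ => ?_
  rw [Finset.sum_ite_eq Finset.univ a (fun b => g (a, b))]
  simp

lemma vecMulVec_mul_vecMulVec {α : Type} [Fintype α] (a b c d : α → ℂ) :
    Matrix.vecMulVec a b * Matrix.vecMulVec c d = (b ⬝ᵥ c) • Matrix.vecMulVec a d := by
  ext p q
  simp only [Matrix.mul_apply, Matrix.vecMulVec_apply, Matrix.smul_apply, smul_eq_mul,
    dotProduct, Finset.sum_mul]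
  refine Finset.sum_congr rfl fun r _ => by ring

lemma trace_vvstar_mul {α : Type} [Fintype α] (v : α → ℂ) (X : Matrix α α ℂ) :
    (Matrix.vecMulVec v (star v) * X).trace = star v ⬝ᵥ (X *ᵥ v) := by
  simp only [Matrix.trace, Matrix.diag_apply, Matrix.mul_apply, Matrix.vecMulVec_apply,
    Pi.star_apply, dotProduct, Matrix.mulVec, Finset.mul_sum]
  rw [Finset.sum_comm]
  refine Finset.sum_congr rfl fun r _ => Finset.sum_congr rfl fun p _ => by ring

lemma vvstar_mul_mul {α : Type} [Fintype α] (v : α → ℂ) (X : Matrix α α ℂ) :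
    Matrix.vecMulVec v (star v) * X * Matrix.vecMulVec v (star v)
      = (star v ⬝ᵥ (X *ᵥ v)) • Matrix.vecMulVec v (star v) := by
  ext p q
  simp only [Matrix.mul_apply, Matrix.vecMulVec_apply, Pi.star_apply, Matrix.mulVec,
    dotProduct, Matrix.smul_apply, smul_eq_mul, Finset.sum_mul, Finset.mul_sum]
  rw [Finset.sum_comm]
  refine Finset.sum_congr rfl fun r _ => Finset.sum_congr rfl fun t _ => by ring

/-! ### the maximally entangled vector -/

def vME (M : ℕ) : Fin M × Fin M → ℂ :=
  fun p => if p.1 = p.2 then (((Real.sqrt M)⁻¹ : ℝ) : ℂ) else 0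

lemma maxEnt_eq (M : ℕ) :
    maxEnt (Fin M) = Matrix.vecMulVec (vME M) (star (vME M)) := by
  ext p q
  simp only [maxEnt, Matrix.of_apply, Matrix.vecMulVec_apply, Pi.star_apply, vME,
    RCLike.star_def, apply_ite (starRingEnd ℂ), map_zero, Complex.conj_ofReal,
    Fintype.card_fin]
  by_cases h1 : p.1 = p.2 <;> by_cases h2 : q.1 = q.2 <;> simp [h1, h2]
  rw [← mul_inv, ← Complex.ofReal_mul, Real.mul_self_sqrt (Nat.cast_nonneg M)]
  push_cast
  ring

lemma sum_normSq_vME {M : ℕ} (hM : 0 < M) : ∑ p, normSq (vME M p) = 1 := by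
  have h : ∀ p : Fin M × Fin M, normSq (vME M p)
      = if p.1 = p.2 then ((M:ℝ))⁻¹ else 0 := by
    intro p
    rw [vME, apply_ite normSq, Complex.normSq_ofReal, Complex.normSq_zero,
      ← mul_inv, Real.mul_self_sqrt (Nat.cast_nonneg M)]
  rw [Finset.sum_congr rfl fun p _ => h p, sum_diag_ite (fun _ => ((M:ℝ))⁻¹),
    Finset.sum_const, Finset.card_univ, Fintype.card_fin, nsmul_eq_mul]
  field_simp

lemma dot_vME {M : ℕ} (hM : 0 < M) : star (vME M) ⬝ᵥ vME M = 1 := by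
  rw [dot_star_self, sum_normSq_vME hM]
  norm_num

lemma psd_maxEnt (M : ℕ) : (maxEnt (Fin M)).PosSemidef := by
  rw [maxEnt_eq]
  exact psd_vecMulVec _

lemma trace_maxEnt {M : ℕ} (hM : 0 < M) : (maxEnt (Fin M)).trace = 1 := by
  have h : ∀ a : Fin M, maxEnt (Fin M) (a, a) (a, a) = (1 : ℂ)/(M : ℂ) := by
    intro a
    simp [maxEnt, Fintype.card_fin]
  rw [Matrix.trace,
    show ∑ p : Fin M × Fin M, (maxEnt (Fin M)).diag p
      = ∑ p : Fin M × Fin M, (if p.1 = p.2 then (1:ℂ)/(M:ℂ) else 0) from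
      Finset.sum_congr rfl fun p _ => by
        by_cases hp : p.1 = p.2
        · have : p = (p.1, p.1) := by
            cases p; simp_all
          rw [if_pos hp, this, Matrix.diag_apply, h]
        · rw [if_neg hp, Matrix.diag_apply]
          simp [maxEnt, hp],
    sum_diag_ite (fun _ => (1:ℂ)/(M:ℂ)), Finset.sum_const, Finset.card_univ,
    Fintype.card_fin, nsmul_eq_mul]
  have : (M:ℂ) ≠ 0 := Nat.cast_ne_zero.mpr hM.ne'
  field_simp

lemma maxEnt_sq {M : ℕ} (hM : 0 < M) :
    maxEnt (Fin M) * maxEnt (Fin M) = maxEnt (Fin M) := by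
  rw [maxEnt_eq, vecMulVec_mul_vecMulVec, dot_vME hM, one_smul]

lemma one_sub_maxEnt_psd {M : ℕ} (hM : 0 < M) :
    ((1 : Matrix (Fin M × Fin M) (Fin M × Fin M) ℂ) - maxEnt (Fin M)).PosSemidef := by
  refine Matrix.PosSemidef.of_dotProduct_mulVec_nonneg ?_ ?_
  · exact Matrix.IsHermitian.sub Matrix.isHermitian_one (psd_maxEnt M).1
  · intro x
    rw [Matrix.sub_mulVec, dotProduct_sub, Matrix.one_mulVec, dot_star_self,
      maxEnt_eq, vecMulVec_quad, ← Complex.ofReal_sub]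
    refine Complex.zero_le_real.mpr (sub_nonneg.mpr ?_)
    have hcs := cs_complex (vME M) x
    have h1 : normSq (∑ q, (starRingEnd ℂ) (vME M q) * x q)
        = ‖∑ q, (starRingEnd ℂ) (vME M q) * x q‖ ^ 2 :=
      (Complex.sq_norm _).symm
    rw [h1]
    by_cases hM : 0 < M
    · rw [sum_normSq_vME hM, Real.sqrt_one, one_mul] at hcs
      calc ‖∑ q, (starRingEnd ℂ) (vME M q) * x q‖ ^ 2
          ≤ Real.sqrt (∑ p, normSq (x p)) ^ 2 := by
            have := norm_nonneg (∑ q, (starRingEnd ℂ) (vME M q) * x q)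
            nlinarith [hcs]
        _ = ∑ p, normSq (x p) :=
            Real.sq_sqrt (Finset.sum_nonneg fun p _ => Complex.normSq_nonneg _)
    · have hM0 : M = 0 := by omega
      subst hM0
      have hz : (∑ q, (starRingEnd ℂ) (vME 0 q) * x q) = 0 :=
        Finset.sum_eq_zero fun q _ => q.1.elim0
      rw [hz]
      simpa using Finset.sum_nonneg fun p _ => Complex.normSq_nonneg (x p)

/-! ### fidelity with maxEnt -/

lemma fid_val {M : ℕ} (hM : 0 < M) {ρ : Matrix (Fin M × Fin M) (Fin M × Fin M) ℂ}
    (hρ : IsState ρ) :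
    fidelity ρ (maxEnt (Fin M)) = ((maxEnt (Fin M) * ρ).trace).re := by
  have hσ : (maxEnt (Fin M)).PosSemidef := psd_maxEnt M
  have h : ρ.PosSemidef ∧ (maxEnt (Fin M)).PosSemidef := ⟨hρ.1, hσ⟩
  rw [fidelity, dif_pos h]
  set c : ℂ := (maxEnt (Fin M) * ρ).trace with hc
  have hcnn : 0 ≤ c := trace_mul_psd_nonneg hσ hρ.1
  have hcre : 0 ≤ c.re := (Complex.nonneg_iff.mp hcnn).1
  have hcim : c.im = 0 := ((Complex.nonneg_iff.mp hcnn).2).symm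
  have hcreal : ((c.re : ℝ) : ℂ) = c := Complex.ext (by simp) (by simp [hcim])
  have hsqσ : psdSqrt h.2 = maxEnt (Fin M) := by
    refine (eq_psdSqrt_of_sq_eq hσ h.2 ?_).symm
    rw [pow_two, maxEnt_sq hM]
  have hKK : (psdSqrt h.1 * psdSqrt h.2)ᴴ * (psdSqrt h.1 * psdSqrt h.2) = c • maxEnt (Fin M) := by
    rw [hsqσ, Matrix.conjTranspose_mul, (hσ.1 : (maxEnt (Fin M))ᴴ = _),
      ((psdSqrt_psd h.1).1 : (psdSqrt h.1)ᴴ = _)]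
    calc maxEnt (Fin M) * psdSqrt h.1 * (psdSqrt h.1 * maxEnt (Fin M))
        = maxEnt (Fin M) * (psdSqrt h.1 * psdSqrt h.1) * maxEnt (Fin M) := by
          simp only [Matrix.mul_assoc]
      _ = maxEnt (Fin M) * ρ * maxEnt (Fin M) := by rw [psdSqrt_mul_self h.1]
      _ = c • maxEnt (Fin M) := by
          rw [maxEnt_eq, vvstar_mul_mul, ← trace_vvstar_mul, ← maxEnt_eq, ← hc]
  have hpsdB := Matrix.posSemidef_conjTranspose_mul_self (psdSqrt h.1 * psdSqrt h.2)
  have hsqB : ((Real.sqrt c.re : ℝ) : ℂ) • maxEnt (Fin M) = psdSqrt hpsdB := by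
    refine eq_psdSqrt_of_sq_eq ?_ hpsdB ?_
    · exact psd_smul_real (psd_maxEnt M) (Real.sqrt_nonneg _)
    · rw [pow_two, Matrix.smul_mul, Matrix.mul_smul, smul_smul, ← Complex.ofReal_mul,
        Real.mul_self_sqrt hcre, maxEnt_sq hM, hKK, hcreal]
  rw [← hsqB, Matrix.trace_smul, smul_eq_mul, trace_maxEnt hM, mul_one,
    Complex.ofReal_re, Real.sq_sqrt hcre]

/-! ### trace transfer -/

variable {ω : Matrix (Fin M × (Fin k → Fin M)) (Fin M × (Fin k → Fin M)) ℂ}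

lemma trace_Pm_mul (i : Fin k)
    (ω : Matrix (Fin M × (Fin k → Fin M)) (Fin M × (Fin k → Fin M)) ℂ) :
    (Pm M k i * ω).trace
      = (M:ℂ)⁻¹ * ∑ f, ∑ b, ω (b, Function.update f i b) (f i, f) := by
  rw [Matrix.trace, Finset.mul_sum]
  rw [Fintype.sum_prod_type_right]
  refine Finset.sum_congr rfl fun f _ => ?_
  rw [Finset.mul_sum]
  have hdiag : ∀ a : Fin M, (Pm M k i * ω).diag (a, f)
      = ∑ q : Fin M × (Fin k → Fin M),
          (if f i = a ∧ Function.update f i q.1 = q.2 then (M:ℂ)⁻¹ else 0)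
            * ω q (a, f) := by
    intro a
    rw [Matrix.diag_apply, Matrix.mul_apply]
    rfl
  rw [Finset.sum_congr rfl fun a _ => hdiag a]
  rw [Finset.sum_eq_single (f i)]
  · rw [Fintype.sum_prod_type]
    refine Finset.sum_congr rfl fun b _ => ?_
    rw [Finset.sum_eq_single (Function.update f i b)]
    · rw [if_pos ⟨rfl, rfl⟩]
    · intro g _ hg
      rw [if_neg (fun hcon => hg hcon.2.symm), zero_mul]
    · intro hnot
      exact absurd (Finset.mem_univ _) hnot
  · intro a _ ha
    refine Finset.sum_eq_zero fun q _ => ?_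
    rw [if_neg (fun hcon => ha hcon.1.symm), zero_mul]
  · intro hnot
    exact absurd (Finset.mem_univ _) hnot

lemma update_comp_swap (f : Fin k → Fin M) (i j : Fin k) (b : Fin M) :
    (Function.update f i b) ∘ (Equiv.swap j i) = Function.update (f ∘ (Equiv.swap j i)) j b := by
  funext l
  by_cases h : l = j
  · subst h
    show (Function.update f i b) ((Equiv.swap _ i) _) = _
    rw [Equiv.swap_apply_left, Function.update_self, Function.update_self]
  · have hne : (Equiv.swap j i) l ≠ i := by
      intro hcon
      exact h ((Equiv.swap j i).injective (hcon.trans (Equiv.swap_apply_left j i).symm))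
    simp only [Function.comp_apply, Function.update_of_ne hne, Function.update_of_ne h]

def compEquiv (M : ℕ) (π : Equiv.Perm (Fin k)) : (Fin k → Fin M) ≃ (Fin k → Fin M) where
  toFun f := f ∘ π
  invFun f := f ∘ π.symm
  left_inv f := by funext l; simp
  right_inv f := by funext l; simp

lemma trace_Pm_perm (hperm : ∀ π : Equiv.Perm (Fin k), permAction π ω = ω)
    (i j : Fin k) : (Pm M k i * ω).trace = (Pm M k j * ω).trace := by
  rw [trace_Pm_mul, trace_Pm_mul]
  congr 1
  set π : Equiv.Perm (Fin k) := Equiv.swap j i with hπ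
  have hωinv : ∀ p q : Fin M × (Fin k → Fin M),
      ω (p.1, p.2 ∘ π) (q.1, q.2 ∘ π) = ω p q := by
    intro p q
    have := congrFun (congrFun (congrArg (fun m => (m : Matrix _ _ ℂ)) (hperm π)) p) q
    simpa [permAction] using this
  have hterm : ∀ f : Fin k → Fin M, ∀ b,
      ω (b, Function.update f i b) (f i, f)
        = ω (b, Function.update (f ∘ π) j b) ((f ∘ π) j, f ∘ π) := by
    intro f b
    have h1 := hωinv (b, Function.update f i b) (f i, f)
    rw [update_comp_swap f i j b] at h1
    have h2 : (f ∘ π) j = f i := by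
      simp only [Function.comp_apply, hπ, Equiv.swap_apply_left]
    rw [← h1, h2]
  rw [Finset.sum_congr rfl fun f _ => Finset.sum_congr rfl fun b _ => hterm f b]
  exact Equiv.sum_comp (compEquiv M π) (fun f => ∑ b, ω (b, Function.update f j b) (f j, f))

lemma trace_maxEnt_marginal (hM : 0 < M) (h0 : 0 < k)
    (ω : Matrix (Fin M × (Fin k → Fin M)) (Fin M × (Fin k → Fin M)) ℂ) :
    (maxEnt (Fin M) * marginalFirst h0 ω).trace = (Pm M k ⟨0, h0⟩ * ω).trace := by
  set i0 : Fin k := ⟨0, h0⟩ with hi0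
  set σ := marginalFirst h0 ω with hσ
  have hσapp : ∀ b a : Fin M, σ (b, b) (a, a)
      = ∑ f, (if f i0 = b then ω (b, f) (a, Function.update f i0 a) else 0) := by
    intro b a
    rw [hσ, marginalFirst]
    rfl
  have hlhs : (maxEnt (Fin M) * σ).trace
      = (M:ℂ)⁻¹ * ∑ a : Fin M, ∑ b : Fin M, σ (b, b) (a, a) := by
    rw [Matrix.trace, Finset.mul_sum]
    have hdiag : ∀ p : Fin M × Fin M, (maxEnt (Fin M) * σ).diag p
        = if p.1 = p.2 then ∑ r : Fin M × Fin M,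
            (if r.1 = r.2 then (M:ℂ)⁻¹ * σ r p else 0) else 0 := by
      intro p
      rw [Matrix.diag_apply, Matrix.mul_apply]
      by_cases hp : p.1 = p.2
      · rw [if_pos hp]
        refine Finset.sum_congr rfl fun r _ => ?_
        by_cases hr : r.1 = r.2
        · rw [if_pos hr]
          simp only [maxEnt, Matrix.of_apply, Fintype.card_fin]
          rw [if_pos (show p.1 = p.2 ∧ r.1 = r.2 from ⟨hp, hr⟩), one_div]
        · rw [if_neg hr]
          simp only [maxEnt, Matrix.of_apply]
          rw [if_neg (fun hcon => hr hcon.2), zero_mul]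
      · rw [if_neg hp]
        refine Finset.sum_eq_zero fun r _ => ?_
        simp only [maxEnt, Matrix.of_apply]
        rw [if_neg (fun hcon => hp hcon.1), zero_mul]
    rw [Finset.sum_congr rfl fun p _ => hdiag p, sum_diag_ite]
    refine Finset.sum_congr rfl fun a _ => ?_
    rw [sum_diag_ite (fun r => (M:ℂ)⁻¹ * σ r (a, a)), Finset.mul_sum]
  rw [hlhs, trace_Pm_mul]
  congr 1
  have hswap : ∑ a : Fin M, ∑ b : Fin M, σ (b, b) (a, a)
      = ∑ a : Fin M, ∑ f, ω (f i0, f) (a, Function.update f i0 a) := by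
    refine Finset.sum_congr rfl fun a _ => ?_
    rw [Finset.sum_congr rfl fun b (_ : b ∈ Finset.univ) => hσapp b a, Finset.sum_comm]
    refine Finset.sum_congr rfl fun f _ => ?_
    rw [Finset.sum_ite_eq Finset.univ (f i0) (fun b => ω (b, f) (a, Function.update f i0 a))]
    simp
  rw [hswap]
  have hre : ∑ a : Fin M, ∑ f, ω (f i0, f) (a, Function.update f i0 a)
      = ∑ p : Fin M × (Fin k → Fin M),
          ω (p.1, Function.update p.2 i0 p.1) (p.2 i0, p.2) := by
    rw [← Equiv.sum_comp (Esh M k i0)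
      (fun p => ω (p.1, Function.update p.2 i0 p.1) (p.2 i0, p.2)), Fintype.sum_prod_type]
    refine Finset.sum_congr rfl fun a _ => Finset.sum_congr rfl fun f _ => ?_
    simp only [Esh, Equiv.coe_fn_mk, Function.update_self, Function.update_idem,
      Function.update_eq_self]
  rw [hre, Fintype.sum_prod_type_right]

lemma overlap_bound {M k : ℕ} (hM : 0 < M) (hk : 2 ≤ k)
    {σ : Matrix (Fin M × Fin M) (Fin M × Fin M) ℂ}
    (hσ : IsState σ) (hext : kExtendible k hk σ) :
    ((maxEnt (Fin M) * σ).trace).re ≤ 1/(M:ℝ) + 1/(k:ℝ) - 1/((M:ℝ)*(k:ℝ)) := by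
  obtain ⟨ω, hωstate, hperm, hmarg⟩ := hext
  have h0 : 0 < k := by omega
  have hA1 : (maxEnt (Fin M) * σ).trace = (Pm M k ⟨0, h0⟩ * ω).trace := by
    rw [← hmarg]
    exact trace_maxEnt_marginal hM _ ω
  have hsum : ((∑ i, Pm M k i) * ω).trace = (k : ℂ) * (Pm M k ⟨0, h0⟩ * ω).trace := by
    rw [Finset.sum_mul, Matrix.trace_sum,
      Finset.sum_congr rfl fun i _ => trace_Pm_perm hperm i ⟨0, h0⟩,
      Finset.sum_const, Finset.card_univ, Fintype.card_fin, nsmul_eq_mul]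
  have hb : (((∑ i, Pm M k i) * ω).trace).re
      ≤ (1 + ((k:ℝ)-1) * (M:ℝ)⁻¹) * (ω.trace).re :=
    re_trace_mul_le hωstate.1 (fun z => quad_bound hM z)
  have htr : (ω.trace).re = 1 := by rw [hωstate.2]; simp
  rw [htr, mul_one] at hb
  rw [hsum] at hb
  have hkmul : ((k : ℂ) * (Pm M k ⟨0, h0⟩ * ω).trace).re
      = (k:ℝ) * ((Pm M k ⟨0, h0⟩ * ω).trace).re := by
    simp [Complex.mul_re]
  rw [hkmul] at hb
  rw [hA1]
  have hkr : (0:ℝ) < (k:ℝ) := by exact_mod_cast h0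
  have hMr : (0:ℝ) < (M:ℝ) := by exact_mod_cast hM
  rw [show 1/(M:ℝ) + 1/(k:ℝ) - 1/((M:ℝ)*(k:ℝ))
      = (1 + ((k:ℝ)-1) * (M:ℝ)⁻¹) / (k:ℝ) by field_simp; ring]
  rw [le_div_iff₀ hkr, mul_comm]
  exact hb

end EkAux
end AuxEk

/-- if a state on `ℂ^M ⊗ ℂ^M` has fidelity at least `1 - ε` with the
maximally entangled state of Schmidt rank `M`, then
`-log₂[1/M + 1/k - 1/(Mk)] ≤ E_k^ε(A;B)_ρ`. -/
theorem EkEps_lower_bound_of_fidelity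
    (k : ℕ) (hk : 2 ≤ k) (ε : ℝ) (hε0 : 0 ≤ ε) (hε1 : ε ≤ 1) (M : ℕ) (hM : 0 < M)
    (ρ : Matrix (Fin M × Fin M) (Fin M × Fin M) ℂ) (hρ : IsState ρ)
    (hfid : 1 - ε ≤ fidelity ρ (maxEnt (Fin M))) :
    (((- Real.logb 2 (1 / (M : ℝ) + 1 / (k : ℝ) - 1 / ((M : ℝ) * (k : ℝ)))) : ℝ) : EReal)
      ≤ EkEps k hk ε ρ := by
  have hc_pos : 0 < 1/(M:ℝ) + 1/(k:ℝ) - 1/((M:ℝ)*(k:ℝ)) := by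
    have hMr : (0:ℝ) < (M:ℝ) := by exact_mod_cast hM
    have hkr : (0:ℝ) < (k:ℝ) := by
      have : 0 < k := by omega
      exact_mod_cast this
    have h1 : 1/(M:ℝ) + 1/(k:ℝ) - 1/((M:ℝ)*(k:ℝ))
        = ((k:ℝ) + (M:ℝ) - 1)/((M:ℝ)*(k:ℝ)) := by
      field_simp
      try ring
    rw [h1]
    apply div_pos
    · have h2 : (1:ℝ) ≤ (M:ℝ) := by exact_mod_cast hM
      have h3 : (1:ℝ) ≤ (k:ℝ) := by exact_mod_cast (show 1 ≤ k by omega)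
      linarith
    · positivity
  rw [EkEps]
  refine le_sInf ?_
  rintro x ⟨σ, hσstate, hσext, rfl⟩
  have hDH : DH ε ρ σ
      = if sInf {x : ℝ | ∃ Λ : Matrix (Fin M × Fin M) (Fin M × Fin M) ℂ,
            Λ.PosSemidef ∧ ((1 : Matrix (Fin M × Fin M) (Fin M × Fin M) ℂ) - Λ).PosSemidef ∧
            1 - ε ≤ ((Λ * ρ).trace).re ∧ x = ((Λ * σ).trace).re} ≤ 0
          then (⊤ : EReal)
          else (((- Real.logb 2 (sInf {x : ℝ | ∃ Λ : Matrix (Fin M × Fin M) (Fin M × Fin M) ℂ,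
            Λ.PosSemidef ∧ ((1 : Matrix (Fin M × Fin M) (Fin M × Fin M) ℂ) - Λ).PosSemidef ∧
            1 - ε ≤ ((Λ * ρ).trace).re ∧ x = ((Λ * σ).trace).re})) : ℝ) : EReal) := rfl
  rw [hDH]
  set SD := {x : ℝ | ∃ Λ : Matrix (Fin M × Fin M) (Fin M × Fin M) ℂ,
      Λ.PosSemidef ∧ ((1 : Matrix (Fin M × Fin M) (Fin M × Fin M) ℂ) - Λ).PosSemidef ∧
      1 - ε ≤ ((Λ * ρ).trace).re ∧ x = ((Λ * σ).trace).re} with hSD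
  have hmemb : ((maxEnt (Fin M) * σ).trace).re ∈ SD := by
    refine ⟨maxEnt (Fin M), EkAux.psd_maxEnt M, EkAux.one_sub_maxEnt_psd hM, ?_, rfl⟩
    rw [← EkAux.fid_val hM hρ]
    exact hfid
  have hlb : ∀ y ∈ SD, (0:ℝ) ≤ y := by
    rintro y ⟨Λ, hΛ, _, _, rfl⟩
    exact EkAux.re_trace_mul_nonneg hΛ hσstate.1
  have hbdd : BddBelow SD := ⟨0, hlb⟩
  have hinf_le : sInf SD ≤ ((maxEnt (Fin M) * σ).trace).re := csInf_le hbdd hmemb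
  have hover := EkAux.overlap_bound hM hk hσstate hσext
  split_ifs with hcase
  · exact le_top
  · push_neg at hcase
    refine EReal.coe_le_coe_iff.mpr (neg_le_neg ?_)
    exact Real.logb_le_logb_of_le (by norm_num) hcase (hinf_le.trans hover)
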